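/- Let m ≥ 2 and h ≥ 2, and let T(m,h) be the complete m-ary tree of height h. Then for every vertex v of depth d with 2 ≤ d ≤ h, Gain(T(m,h), Z(v), μ2) ≤ (α2 + β2)·(m^{h−1}−1)/(m−1) + (m−1)·β2·(m^h−1)/(m−1), and this bound is strictly smaller than Gain(T(m,h), Z(root), μ2) = m^{h+1}(m^h−1)/(m^{h+2}−m^{h+1}+m^h−1). -/

import Mathlib

/-- The competitive-diffusion payoff of Player 1 with starting vertex `x` against
starting vertex `y`: the number of vertices strictly closer to `x` than to `y`. -/
noncomputable def gain {V : Type*} (G : SimpleGraph V) (x y : V) : ℕ :=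
  {u : V | G.dist u x < G.dist u y}.ncard

/-- The expected gain of Player 1 playing mixed strategy `X` against mixed strategy `Y`. -/
noncomputable def Gain {V : Type*} (G : SimpleGraph V) [Fintype V] (X Y : V → ℝ) : ℝ :=
  ∑ x : V, ∑ y : V, X x * Y y * (gain G x y : ℝ)

/-- The pure strategy `Z(v)` concentrated on vertex `v`. -/
def pureStrat {V : Type*} [DecidableEq V] (v : V) : V → ℝ := fun u => if u = v then 1 else 0

/-- Vertices of the complete `m`-ary tree of height `h`: lists over `Fin m` of length
at most `h`; the length of the list is the depth of the vertex. -/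
def TreeVert (m h : ℕ) := {l : List (Fin m) // l.length ≤ h}

noncomputable instance (m h : ℕ) : Fintype (TreeVert m h) :=
  (List.finite_length_le (Fin m) h).fintype

instance (m h : ℕ) : DecidableEq (TreeVert m h) := Subtype.instDecidableEq

instance (m h : ℕ) : Nonempty (TreeVert m h) := ⟨⟨[], by simp⟩⟩

/-- The complete `m`-ary tree of height `h`: each vertex of depth `< h` has exactly
`m` children, obtained by prepending an element of `Fin m`. -/
def CompleteTree (m h : ℕ) : SimpleGraph (TreeVert m h) :=
  SimpleGraph.fromRel (fun x y => x.1 = y.1.tail ∧ y.1.length = x.1.length + 1)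

/-- The root of the complete `m`-ary tree. -/
def root (m h : ℕ) : TreeVert m h := ⟨[], by simp⟩

noncomputable def alpha1 (m h : ℕ) : ℝ :=
  ((m : ℝ) ^ h - 1) / ((m : ℝ) ^ (h + 2) - (m : ℝ) ^ (h + 1) + (m : ℝ) ^ h - 1)

noncomputable def beta1 (m h : ℕ) : ℝ :=
  ((m : ℝ) - 1) * (m : ℝ) ^ h / ((m : ℝ) ^ (h + 2) - (m : ℝ) ^ (h + 1) + (m : ℝ) ^ h - 1)

noncomputable def alpha2 (m h : ℕ) : ℝ :=
  ((m : ℝ) - 1) * ((m : ℝ) ^ (h + 1) - (m : ℝ) ^ h + 1) /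
    ((m : ℝ) ^ (h + 2) - (m : ℝ) ^ (h + 1) + (m : ℝ) ^ h - 1)

noncomputable def beta2 (m h : ℕ) : ℝ :=
  ((m : ℝ) ^ h - 1) / ((m : ℝ) ^ (h + 2) - (m : ℝ) ^ (h + 1) + (m : ℝ) ^ h - 1)

/-- The mixed strategy `μ₁`: probability `α₁` on the root, `β₁` on each depth-1 vertex. -/
noncomputable def mu1 (m h : ℕ) : TreeVert m h → ℝ := fun v =>
  if v.1.length = 0 then alpha1 m h else if v.1.length = 1 then beta1 m h else 0

/-- The mixed strategy `μ₂`: probability `α₂` on the root, `β₂` on each depth-1 vertex. -/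
noncomputable def mu2 (m h : ℕ) : TreeVert m h → ℝ := fun v =>
  if v.1.length = 0 then alpha2 m h else if v.1.length = 1 then beta2 m h else 0

/-!
Vertices are words over `Fin m` and the parent of a word is its tail, so ancestors are suffixes
and the distance of two words is the sum of their lengths minus twice the length of their
longest common suffix. Hence a vertex `v` of depth at least two beats the root, and its own
depth-one ancestor, only inside the subtree of its depth-two ancestor, and beats every other
depth-one vertex only inside the subtree of its depth-one ancestor; subtrees of depth-`d`
vertices have `(m^{h-d+1} - 1)/(m - 1)` vertices. The root beats a depth-one vertex `w` on the
complement of the subtree of `w`, that is on `m^h` vertices. Writing `K = m` and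
`a = m^{h-1}`, the strict inequality reduces to `K(K-2)(K²-K+1)a² + (K²-K+2)a - 1 > 0`.
-/

open SimpleGraph

theorem List.length_rtake {α : Type*} (l : List α) (k : ℕ) :
    (l.rtake k).length = min k l.length := by
  simp only [List.rtake, List.length_drop]
  omega

theorem List.IsSuffix.rtake_suffix {α : Type*} {t l : List α} (ht : t <:+ l) {k : ℕ}
    (hk : k ≤ t.length) : l.rtake k <:+ t := by
  obtain ⟨s, rfl⟩ := ht
  have : (s ++ t).length - k = s.length + (t.length - k) := by
    rw [List.length_append]; omega
  rw [List.rtake, this, ← List.drop_drop, List.drop_left]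
  exact List.drop_suffix _ _

theorem gain_self {V : Type*} (G : SimpleGraph V) (x : V) : gain G x x = 0 := by
  simp [gain]

theorem Gain_pureStrat {V : Type*} [Fintype V] [DecidableEq V] (G : SimpleGraph V) (v : V)
    (Y : V → ℝ) : Gain G (pureStrat v) Y = ∑ y, Y y * (gain G v y : ℝ) := by
  rw [Gain, Finset.sum_eq_single v (fun x _ hx => by simp [pureStrat, hx]) (by simp)]
  simp [pureStrat]

def treeSize (m k : ℕ) : ℕ := ∑ j ∈ Finset.range (k + 1), m ^ j

theorem treeSize_succ (m k : ℕ) : treeSize m (k + 1) = treeSize m k + m ^ (k + 1) :=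
  Finset.sum_range_succ _ _

theorem cast_treeSize {m : ℕ} (hm : m ≠ 1) (k : ℕ) :
    (treeSize m k : ℝ) = ((m : ℝ) ^ (k + 1) - 1) / ((m : ℝ) - 1) := by
  rw [treeSize, Nat.cast_sum, ← geom_sum_eq (by exact_mod_cast hm)]
  push_cast
  rfl

section Weights

variable {m : ℕ}

theorem mu2_denom_pos (hm : 2 ≤ m) (h : ℕ) :
    0 < (m : ℝ) ^ (h + 2) - (m : ℝ) ^ (h + 1) + (m : ℝ) ^ h - 1 := by
  have hK : (2 : ℝ) ≤ m := by exact_mod_cast hm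
  have hpow : (1 : ℝ) ≤ (m : ℝ) ^ h := one_le_pow₀ (by linarith)
  have : (m : ℝ) ^ (h + 2) - (m : ℝ) ^ (h + 1) + (m : ℝ) ^ h =
      (m : ℝ) ^ h * (m ^ 2 - m + 1) := by
    ring
  have h3 : (3 : ℝ) ≤ (m : ℝ) ^ 2 - m + 1 := by nlinarith
  have := mul_le_mul hpow h3 (by norm_num) (by linarith)
  linarith

theorem alpha2_nonneg (hm : 2 ≤ m) (h : ℕ) : 0 ≤ alpha2 m h := by
  have hK : (2 : ℝ) ≤ m := by exact_mod_cast hm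
  have : (m : ℝ) ^ h ≤ (m : ℝ) ^ (h + 1) := pow_le_pow_right₀ (by linarith) h.le_succ
  exact div_nonneg (mul_nonneg (by linarith) (by linarith)) (mu2_denom_pos hm h).le

theorem beta2_nonneg (hm : 2 ≤ m) (h : ℕ) : 0 ≤ beta2 m h := by
  have : (1 : ℝ) ≤ (m : ℝ) ^ h := one_le_pow₀ (by exact_mod_cast (by omega : 1 ≤ m))
  exact div_nonneg (by linarith) (mu2_denom_pos hm h).le

theorem mu2_deep_bound_lt_root_gain (hm : 2 ≤ m) {h : ℕ} (hh : 1 ≤ h) :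
    (alpha2 m h + beta2 m h) * (((m : ℝ) ^ (h - 1) - 1) / ((m : ℝ) - 1)) +
        ((m : ℝ) - 1) * beta2 m h * (((m : ℝ) ^ h - 1) / ((m : ℝ) - 1)) <
      (m : ℝ) ^ (h + 1) * ((m : ℝ) ^ h - 1) /
        ((m : ℝ) ^ (h + 2) - (m : ℝ) ^ (h + 1) + (m : ℝ) ^ h - 1) := by
  have hD := mu2_denom_pos hm h
  have hK : (2 : ℝ) ≤ m := by exact_mod_cast hm
  have hK1 : (0 : ℝ) < m - 1 := by linarith
  obtain ⟨k, rfl⟩ : ∃ k, h = k + 1 := ⟨h - 1, by omega⟩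
  have ha : (1 : ℝ) ≤ (m : ℝ) ^ k := one_le_pow₀ (by linarith)
  set a := (m : ℝ) ^ k
  set K := (m : ℝ)
  simp only [alpha2, beta2, Nat.add_sub_cancel] at hD ⊢
  have e1 : K ^ (k + 1) = K * a := pow_succ' K k
  have e2 : K ^ (k + 1 + 1) = K ^ 2 * a := by rw [pow_add, pow_succ']; ring
  have e3 : K ^ (k + 1 + 2) = K ^ 3 * a := by rw [pow_add, pow_succ']; ring
  rw [e1, e2, e3] at hD ⊢
  rw [← sub_pos]
  have hdiff : K ^ 2 * a * (K * a - 1) / (K ^ 3 * a - K ^ 2 * a + K * a - 1) -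
      (((K - 1) * (K ^ 2 * a - K * a + 1) / (K ^ 3 * a - K ^ 2 * a + K * a - 1) +
        (K * a - 1) / (K ^ 3 * a - K ^ 2 * a + K * a - 1)) * ((a - 1) / (K - 1)) +
        (K - 1) * ((K * a - 1) / (K ^ 3 * a - K ^ 2 * a + K * a - 1)) * ((K * a - 1) / (K - 1))) =
      (K * (K - 2) * (K ^ 2 - K + 1) * a ^ 2 + (K ^ 2 - K + 2) * a - 1) /
        ((K ^ 3 * a - K ^ 2 * a + K * a - 1) * (K - 1)) := by
    field_simp
    ring
  rw [hdiff]
  refine div_pos ?_ (mul_pos hD hK1)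
  have : 0 ≤ K * (K - 2) * (K ^ 2 - K + 1) * a ^ 2 := by
    have : 0 ≤ K ^ 2 - K + 1 := by nlinarith
    have : 0 ≤ K - 2 := by linarith
    positivity
  nlinarith

end Weights

namespace CompleteTree

variable {m h : ℕ}

theorem adj_iff {x y : TreeVert m h} :
    (CompleteTree m h).Adj x y ↔ (∃ a, y.1 = a :: x.1) ∨ (∃ a, x.1 = a :: y.1) := by
  constructor
  · rintro ⟨-, ⟨htail, hlen⟩ | ⟨htail, hlen⟩⟩
    · left
      rcases hy : y.1 with _ | ⟨a, t⟩
      · simp [hy] at hlen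
      · exact ⟨a, by simp_all⟩
    · right
      rcases hx : x.1 with _ | ⟨a, t⟩
      · simp [hx] at hlen
      · exact ⟨a, by simp_all⟩
  · rintro (⟨a, ha⟩ | ⟨a, ha⟩)
    · refine ⟨fun e => ?_, Or.inl ⟨by simp [ha], by simp [ha]⟩⟩
      simpa [e] using congrArg List.length ha
    · refine ⟨fun e => ?_, Or.inr ⟨by simp [ha], by simp [ha]⟩⟩
      simpa [e] using congrArg List.length ha

theorem exists_walk_of_suffix :
    ∀ (l : List (Fin m)) (hl : l.length ≤ h) (x : TreeVert m h), x.1 <:+ l →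
      ∃ p : (CompleteTree m h).Walk x ⟨l, hl⟩, p.length = l.length - x.1.length
  | [], hl, x, hs => by
    obtain rfl : x = ⟨[], hl⟩ := Subtype.ext (List.suffix_nil.mp hs)
    exact ⟨Walk.nil, rfl⟩
  | a :: t, hl, x, hs => by
    rcases List.suffix_cons_iff.mp hs with he | hs'
    · obtain rfl : x = ⟨a :: t, hl⟩ := Subtype.ext he
      exact ⟨Walk.nil, by rw [Nat.sub_self]; rfl⟩
    · have ht : t.length ≤ h := le_trans (by simp) hl
      obtain ⟨p, hp⟩ := exists_walk_of_suffix t ht x hs'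
      have hadj : (CompleteTree m h).Adj ⟨t, ht⟩ ⟨a :: t, hl⟩ :=
        adj_iff.mpr (Or.inl ⟨a, rfl⟩)
      refine ⟨p.concat hadj, ?_⟩
      have := hs'.length_le
      refine (Walk.length_concat p hadj).trans ?_
      rw [hp, List.length_cons]
      omega

theorem dist_le_of_suffix {x y : TreeVert m h} (hs : x.1 <:+ y.1) :
    (CompleteTree m h).dist x y ≤ y.1.length - x.1.length := by
  obtain ⟨p, hp⟩ := exists_walk_of_suffix y.1 y.2 x hs
  exact hp ▸ dist_le p

theorem connected : (CompleteTree m h).Connected := by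
  have reach (x : TreeVert m h) : (CompleteTree m h).Reachable (root m h) x :=
    ⟨(exists_walk_of_suffix x.1 x.2 (root m h) List.nil_suffix).choose⟩
  exact ⟨fun x y => (reach x).symm.trans (reach y)⟩

/-- Every step of a walk changes the length of the common suffix of its ends by at most one,
so a walk between `x` and `y` whose ends share no suffix longer than `c` climbs at least
`|x| - c` and then descends at least `|y| - c` levels. -/
theorem length_add_length_le_walk_length {x y : TreeVert m h} (p : (CompleteTree m h).Walk x y) :
    ∀ c : ℕ, (∀ t : List (Fin m), t <:+ x.1 → t <:+ y.1 → t.length ≤ c) →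
      x.1.length + y.1.length ≤ p.length + 2 * c := by
  induction p with
  | nil =>
    intro c hc
    have := hc _ List.suffix_rfl List.suffix_rfl
    omega
  | @cons u w y hadj q ih =>
    intro c hc
    rcases adj_iff.mp hadj with ⟨a, ha⟩ | ⟨a, ha⟩
    · have hw : w.1.length = u.1.length + 1 := by simp [ha]
      suffices w.1.length + y.1.length ≤ q.length + 2 * (c + 1) by
        simp only [Walk.length_cons]; omega
      refine ih (c + 1) fun t htw hty => ?_
      rw [ha] at htw
      rcases List.suffix_cons_iff.mp htw with rfl | ht
      · have := hc u.1 List.suffix_rfl ((List.suffix_cons a u.1).trans hty)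
        simp only [List.length_cons]; omega
      · exact (hc t ht hty).trans c.le_succ
    · have hu : u.1.length = w.1.length + 1 := by simp [ha]
      have := ih c fun t htw hty => hc t (ha ▸ htw.trans (List.suffix_cons a w.1)) hty
      simp only [Walk.length_cons]; omega

theorem length_add_length_le_dist {x y : TreeVert m h} (c : ℕ)
    (hc : ∀ t : List (Fin m), t <:+ x.1 → t <:+ y.1 → t.length ≤ c) :
    x.1.length + y.1.length ≤ (CompleteTree m h).dist x y + 2 * c := by
  obtain ⟨p, hp⟩ := connected.exists_walk_length_eq_dist x y
  exact hp ▸ length_add_length_le_walk_length p c hc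

theorem dist_root (u : TreeVert m h) : (CompleteTree m h).dist u (root m h) = u.1.length := by
  have hroot : (root m h).1.length = 0 := rfl
  have hle := dist_le_of_suffix (x := root m h) (y := u) List.nil_suffix
  have hge := length_add_length_le_dist (x := u) (y := root m h) 0 fun t _ ht => by
    simp [List.suffix_nil.mp ht]
  rw [dist_comm] at hle
  omega

theorem dist_depth_one_of_suffix {u w : TreeVert m h} (hw : w.1.length = 1) (hs : w.1 <:+ u.1) :
    (CompleteTree m h).dist u w = u.1.length - 1 := by
  have hle := dist_le_of_suffix hs
  have hge := length_add_length_le_dist (x := u) (y := w) 1 fun t _ ht => hw ▸ ht.length_le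
  have := hs.length_le
  rw [dist_comm] at hle
  omega

theorem length_add_one_le_dist_depth_one {u w : TreeVert m h} (hw : w.1.length = 1)
    (hs : ¬ w.1 <:+ u.1) : u.1.length + 1 ≤ (CompleteTree m h).dist u w := by
  obtain ⟨a, ha⟩ := List.length_eq_one_iff.mp hw
  have := length_add_length_le_dist (x := u) (y := w) 0 fun t htu htw => by
    rw [ha] at htw
    rcases List.suffix_cons_iff.mp htw with rfl | ht
    · exact absurd (ha ▸ htu) hs
    · simpa using ht.length_le
  omega

theorem dist_depth_one_le {u w : TreeVert m h} (hw : w.1.length = 1) :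
    (CompleteTree m h).dist u w ≤ u.1.length + 1 := by
  have htri := connected.dist_triangle (u := u) (v := root m h) (w := w)
  have hrw : (CompleteTree m h).dist (root m h) w ≤ 1 := by
    simpa [hw, root] using dist_le_of_suffix (x := root m h) (y := w) List.nil_suffix
  rw [dist_root] at htri
  omega

theorem length_add_length_le_dist_of_not_rtake_suffix {u v : TreeVert m h} {k : ℕ}
    (hk : 1 ≤ k) (hs : ¬ v.1.rtake k <:+ u.1) :
    u.1.length + v.1.length ≤ (CompleteTree m h).dist u v + 2 * (k - 1) := by
  refine length_add_length_le_dist (k - 1) fun t htu htv => ?_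
  by_contra! hlt
  exact hs ((htv.rtake_suffix (by omega)).trans htu)

def treeVertEquivSigma (m k : ℕ) : TreeVert m k ≃ Σ i : Fin (k + 1), (Fin i → Fin m) where
  toFun l := ⟨⟨l.1.length, Nat.lt_succ_of_le l.2⟩, l.1.get⟩
  invFun p := ⟨List.ofFn p.2, by simpa using Nat.le_of_lt_succ p.1.2⟩
  left_inv l := Subtype.ext (List.ofFn_get l.1)
  right_inv := by
    rintro ⟨⟨i, hi⟩, f⟩
    refine Sigma.ext (by simp) ?_
    rw [Fin.heq_fun_iff (List.length_ofFn (f := f))]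
    simp

theorem card_treeVert (m k : ℕ) : Nat.card (TreeVert m k) = treeSize m k := by
  rw [Nat.card_congr (treeVertEquivSigma m k), Nat.card_eq_fintype_card, Fintype.card_sigma]
  simp [treeSize, Fin.sum_univ_eq_sum_range]

def subtreeEquiv (s : List (Fin m)) (hs : s.length ≤ h) :
    {u : TreeVert m h // s <:+ u.1} ≃ TreeVert m (h - s.length) where
  toFun u := ⟨u.1.1.take (u.1.1.length - s.length), by
    have := u.2.length_le
    have := u.1.2
    simp only [List.length_take]
    omega⟩
  invFun l := ⟨⟨l.1 ++ s, by
    have := l.2; rw [List.length_append]; omega⟩, ⟨l.1, rfl⟩⟩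
  left_inv := by
    rintro ⟨⟨l, hl⟩, w, hw⟩
    refine Subtype.ext (Subtype.ext ?_)
    simp only at hw
    subst hw
    simp
  right_inv l := Subtype.ext (by simp)

theorem ncard_setOf_suffix (s : List (Fin m)) (hs : s.length ≤ h) :
    {u : TreeVert m h | s <:+ u.1}.ncard = treeSize m (h - s.length) := by
  rw [← Nat.card_coe_set_eq, ← card_treeVert]
  exact Nat.card_congr (subtreeEquiv s hs)

theorem ncard_setOf_not_suffix (s : List (Fin m)) (hs : s.length ≤ h) :
    {u : TreeVert m h | ¬ s <:+ u.1}.ncard = treeSize m h - treeSize m (h - s.length) := by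
  have := Set.ncard_add_ncard_compl {u : TreeVert m h | s <:+ u.1}
  rw [card_treeVert, ncard_setOf_suffix s hs] at this
  rw [← Set.compl_ofPred]
  omega

theorem gain_le_treeSize_of_forall_suffix {v y : TreeVert m h} {s : List (Fin m)}
    (hs : s.length ≤ h)
    (hsub : ∀ u : TreeVert m h,
      (CompleteTree m h).dist u v < (CompleteTree m h).dist u y → s <:+ u.1) :
    gain (CompleteTree m h) v y ≤ treeSize m (h - s.length) := by
  rw [← ncard_setOf_suffix s hs]
  exact Set.ncard_le_ncard hsub

theorem gain_root_of_length_eq_one (hh : 1 ≤ h) {w : TreeVert m h} (hw : w.1.length = 1) :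
    gain (CompleteTree m h) (root m h) w = m ^ h := by
  have hset : {u : TreeVert m h |
      (CompleteTree m h).dist u (root m h) < (CompleteTree m h).dist u w} =
      {u | ¬ w.1 <:+ u.1} := by
    ext u
    simp only [Set.mem_ofPred_eq, dist_root]
    constructor
    · intro hlt hs
      have := dist_depth_one_of_suffix hw hs
      omega
    · intro hs
      have := length_add_one_le_dist_depth_one hw hs
      omega
  rw [gain, hset, ncard_setOf_not_suffix w.1 (by omega), hw]
  obtain ⟨k, rfl⟩ : ∃ k, h = k + 1 := ⟨h - 1, by omega⟩
  rw [Nat.add_sub_cancel, treeSize_succ, Nat.add_sub_cancel_left]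

theorem gain_root_le_treeSize {v : TreeVert m h} (hv : 2 ≤ v.1.length) :
    gain (CompleteTree m h) v (root m h) ≤ treeSize m (h - 2) := by
  have hlen : (v.1.rtake 2).length = 2 := by rw [List.length_rtake]; omega
  refine (gain_le_treeSize_of_forall_suffix (s := v.1.rtake 2) (by have := v.2; omega)
    fun u hlt => ?_).trans_eq (by rw [hlen])
  by_contra hs
  have := length_add_length_le_dist_of_not_rtake_suffix one_le_two hs
  rw [dist_root] at hlt
  omega

theorem gain_le_of_length_eq_one {v w : TreeVert m h} (hv : 2 ≤ v.1.length)
    (hw : w.1.length = 1) :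
    gain (CompleteTree m h) v w ≤ treeSize m (h - 1) := by
  have hlen : (v.1.rtake 1).length = 1 := by rw [List.length_rtake]; omega
  refine (gain_le_treeSize_of_forall_suffix (s := v.1.rtake 1) (by have := v.2; omega)
    fun u hlt => ?_).trans_eq (by rw [hlen])
  by_contra hs
  have := length_add_length_le_dist_of_not_rtake_suffix le_rfl hs
  have := dist_depth_one_le (u := u) hw
  omega

theorem gain_le_of_eq_rtake_one {v w : TreeVert m h} (hv : 2 ≤ v.1.length)
    (hw : w.1 = v.1.rtake 1) :
    gain (CompleteTree m h) v w ≤ treeSize m (h - 2) := by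
  have hw1 : w.1.length = 1 := by rw [hw, List.length_rtake]; omega
  have hlen : (v.1.rtake 2).length = 2 := by rw [List.length_rtake]; omega
  refine (gain_le_treeSize_of_forall_suffix (s := v.1.rtake 2) (by have := v.2; omega)
    fun u hlt => ?_).trans_eq (by rw [hlen])
  by_contra hs
  have := length_add_length_le_dist_of_not_rtake_suffix one_le_two hs
  by_cases hwu : w.1 <:+ u.1
  · have := dist_depth_one_of_suffix hw1 hwu
    omega
  · have := length_add_length_le_dist_of_not_rtake_suffix le_rfl (hw ▸ hwu)
    have := dist_depth_one_le (u := u) hw1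
    omega

def child (hh : 1 ≤ h) (a : Fin m) : TreeVert m h := ⟨[a], hh⟩

theorem child_injective (hh : 1 ≤ h) : Function.Injective (child (m := m) hh) :=
  fun a b e => by simpa [child] using congrArg Subtype.val e

theorem sum_mu2_mul (hh : 1 ≤ h) (g : TreeVert m h → ℝ) :
    ∑ y, mu2 m h y * g y = alpha2 m h * g (root m h) + beta2 m h * ∑ a, g (child hh a) := by
  classical
  have hroot : root m h ∉ Finset.univ.image (child hh) := by
    simp only [Finset.mem_image, not_exists, not_and]
    intro a _ ha
    simpa [child, root] using congrArg Subtype.val ha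
  rw [← Finset.sum_subset (Finset.subset_univ (insert (root m h) (Finset.univ.image (child hh)))),
    Finset.sum_insert hroot, Finset.sum_image (child_injective hh).injOn, Finset.mul_sum]
  · simp [mu2, root, child]
  · intro y _ hy
    have h0 : y.1.length ≠ 0 := fun h0 =>
      hy (Finset.mem_insert.mpr (Or.inl (Subtype.ext (List.length_eq_zero_iff.mp h0))))
    have h1 : y.1.length ≠ 1 := fun h1 => by
      obtain ⟨a, ha⟩ := List.length_eq_one_iff.mp h1
      exact hy (Finset.mem_insert_of_mem
        (Finset.mem_image.mpr ⟨a, Finset.mem_univ a, Subtype.ext ha.symm⟩))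
    simp [mu2, h0, h1]

theorem Gain_pureStrat_root_mu2 (hh : 1 ≤ h) :
    Gain (CompleteTree m h) (pureStrat (root m h)) (mu2 m h) =
      (m : ℝ) ^ (h + 1) * ((m : ℝ) ^ h - 1) /
        ((m : ℝ) ^ (h + 2) - (m : ℝ) ^ (h + 1) + (m : ℝ) ^ h - 1) := by
  simp only [Gain_pureStrat, sum_mu2_mul hh, gain_self,
    gain_root_of_length_eq_one hh (w := child hh _) rfl]
  simp only [beta2, Finset.sum_const, Finset.card_univ, Fintype.card_fin, nsmul_eq_mul]
  push_cast
  ring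

theorem Gain_pureStrat_mu2_le (hm : 2 ≤ m) {v : TreeVert m h} (hv : 2 ≤ v.1.length) :
    Gain (CompleteTree m h) (pureStrat v) (mu2 m h) ≤
      (alpha2 m h + beta2 m h) * treeSize m (h - 2) +
        ((m : ℝ) - 1) * beta2 m h * treeSize m (h - 1) := by
  have hh : 1 ≤ h := by have := v.2; omega
  obtain ⟨a₀, ha₀⟩ := List.length_eq_one_iff.mp
    (show (v.1.rtake 1).length = 1 by rw [List.length_rtake]; omega)
  have hroot : (gain (CompleteTree m h) v (root m h) : ℝ) ≤ treeSize m (h - 2) := by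
    exact_mod_cast gain_root_le_treeSize hv
  have hanc : (gain (CompleteTree m h) v (child hh a₀) : ℝ) ≤ treeSize m (h - 2) := by
    exact_mod_cast gain_le_of_eq_rtake_one hv (w := child hh a₀) ha₀.symm
  have hrest :
      (∑ a ∈ Finset.univ.erase a₀, (gain (CompleteTree m h) v (child hh a) : ℝ)) ≤
      ((m : ℝ) - 1) * treeSize m (h - 1) := by
    have := Finset.sum_le_card_nsmul (Finset.univ.erase a₀) _ _
      fun a _ => gain_le_of_length_eq_one hv (w := child hh a) rfl
    rw [Finset.card_erase_of_mem (Finset.mem_univ a₀), Finset.card_univ, Fintype.card_fin,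
      smul_eq_mul] at this
    have hcast := Nat.cast_le (α := ℝ) |>.mpr this
    push_cast [Nat.cast_sub (by omega : 1 ≤ m)] at hcast
    exact hcast
  rw [Gain_pureStrat, sum_mu2_mul hh, ← Finset.add_sum_erase _ _ (Finset.mem_univ a₀)]
  have := alpha2_nonneg hm h
  have := beta2_nonneg hm h
  calc alpha2 m h * gain (CompleteTree m h) v (root m h) +
        beta2 m h * (gain (CompleteTree m h) v (child hh a₀) +
          ∑ a ∈ Finset.univ.erase a₀, (gain (CompleteTree m h) v (child hh a) : ℝ))
      ≤ alpha2 m h * treeSize m (h - 2) +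
        beta2 m h * (treeSize m (h - 2) + ((m : ℝ) - 1) * treeSize m (h - 1)) := by
        gcongr
    _ = _ := by ring

end CompleteTree

/-- On the complete `m`-ary tree of height `h ≥ 2`, for every vertex `v` of depth
`2 ≤ d ≤ h`, `Gain(T, Z(v), μ₂) ≤ (α₂+β₂)(m^{h-1}-1)/(m-1) + (m-1)β₂(m^h-1)/(m-1)`,
and this bound is strictly smaller than
`Gain(T, Z(root), μ₂) = m^{h+1}(m^h-1)/(m^{h+2}-m^{h+1}+m^h-1)`. -/
theorem stmt_17 (m h : ℕ) (hm : 2 ≤ m) (hh : 2 ≤ h) :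
    (∀ v : TreeVert m h, 2 ≤ v.1.length →
      Gain (CompleteTree m h) (pureStrat v) (mu2 m h) ≤
        (alpha2 m h + beta2 m h) * (((m : ℝ) ^ (h - 1) - 1) / ((m : ℝ) - 1)) +
          ((m : ℝ) - 1) * beta2 m h * (((m : ℝ) ^ h - 1) / ((m : ℝ) - 1))) ∧
    (alpha2 m h + beta2 m h) * (((m : ℝ) ^ (h - 1) - 1) / ((m : ℝ) - 1)) +
        ((m : ℝ) - 1) * beta2 m h * (((m : ℝ) ^ h - 1) / ((m : ℝ) - 1)) <
      Gain (CompleteTree m h) (pureStrat (root m h)) (mu2 m h) ∧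
    Gain (CompleteTree m h) (pureStrat (root m h)) (mu2 m h) =
      (m : ℝ) ^ (h + 1) * ((m : ℝ) ^ h - 1) /
        ((m : ℝ) ^ (h + 2) - (m : ℝ) ^ (h + 1) + (m : ℝ) ^ h - 1) := by
  have hroot := CompleteTree.Gain_pureStrat_root_mu2 (m := m) (by omega : 1 ≤ h)
  refine ⟨fun v hv => (CompleteTree.Gain_pureStrat_mu2_le hm hv).trans_eq ?_,
    hroot ▸ mu2_deep_bound_lt_root_gain hm (by omega), hroot⟩
  rw [cast_treeSize (by omega), cast_treeSize (by omega), show h - 2 + 1 = h - 1 by omega,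
    show h - 1 + 1 = h by omega]
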